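/- For every integer h ≥ 0 and every integer m ≥ 0, E_{m,q}^{(h+1,1)} = Σ_{j=0}^{h} C(h,j) (q−1)^j E_{m+j,q}, where E_{n,q} := E_{n,q}^{(1,1)} are the basic q-Euler numbers. -/
import Mathlib


open Finset

/-- The q-number `[x]_q = (1 - q^x)/(1 - q)`, with `q^x = exp (x * log q)` (rpow). -/
noncomputable def qNum (q x : ℝ) : ℝ := (1 - q ^ x) / (1 - q)

/-- `[l]_{-q} = (1 - (-q)^l)/(1 + q)` for a natural number `l`. -/
noncomputable def qNumNeg (q : ℝ) (l : ℕ) : ℝ := (1 - (-q) ^ l) / (1 + q)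

/-- The higher-order q-Euler polynomial
`E_{m,q}^{(h,k)}(x) = ((1+q)^k/(1-q)^m) * Σ_{j=0}^m C(m,j) (-1)^j q^{jx} / Π_{i=0}^{k-1} (1 + q^{h+j-i})`. -/
noncomputable def qE (q : ℝ) (h : ℤ) (k m : ℕ) (x : ℝ) : ℝ :=
  ((1 + q) ^ k / (1 - q) ^ m) *
    ∑ j ∈ Finset.range (m + 1),
      (m.choose j : ℝ) * (-1) ^ j * q ^ ((j : ℝ) * x) /
        ∏ i ∈ Finset.range k, (1 + q ^ ((h : ℝ) + (j : ℝ) - (i : ℝ)))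

theorem stmt_14 (q : ℝ) (hq : 0 < q) (hq1 : q ≠ 1) (h : ℕ) (m : ℕ) :
    qE q ((h : ℤ) + 1) 1 m 0 =
      ∑ j ∈ Finset.range (h + 1), (h.choose j : ℝ) * (q - 1) ^ j * qE q 1 1 (m + j) 0 := by
  have h1q : (1 : ℝ) - q ≠ 0 := sub_ne_zero.2 (Ne.symm hq1)
  set f : ℕ → ℝ := fun n => 1 / (1 + q ^ ((n : ℝ) + 1)) with hf
  -- key : (-1)^n * Δ^[n] f y = ∑ l, C(n,l) (-1)^l f (y + l)
  have key : ∀ (n y : ℕ), (-1 : ℝ) ^ n * ((fwdDiff (1:ℕ))^[n] f) y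
      = ∑ l ∈ Finset.range (n + 1), (n.choose l : ℝ) * (-1) ^ l * f (y + l) := by
    intro n y
    rw [fwdDiff_iter_eq_sum_shift, Finset.mul_sum]
    refine Finset.sum_congr rfl fun l hl => ?_
    rw [Finset.mem_range, Nat.lt_succ_iff] at hl
    rw [zsmul_eq_mul, smul_eq_mul, mul_one]
    push_cast
    have e1 : (-1 : ℝ) ^ n = (-1) ^ (n - l) * (-1) ^ l := by
      rw [← pow_add, Nat.sub_add_cancel hl]
    have e2 : (-1 : ℝ) ^ (n - l) * (-1) ^ (n - l) = 1 := by
      rw [← pow_add, Even.neg_one_pow ⟨n - l, rfl⟩]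
    calc (-1 : ℝ) ^ n * ((-1) ^ (n - l) * (n.choose l : ℝ) * f (y + l))
        = ((-1 : ℝ) ^ (n - l) * (-1) ^ (n - l)) * ((n.choose l : ℝ) * (-1) ^ l * f (y + l)) := by
          rw [e1]; ring
      _ = (n.choose l : ℝ) * (-1) ^ l * f (y + l) := by rw [e2, one_mul]
  -- main combinatorial identity
  have main : ∑ l ∈ Finset.range (m + 1), (m.choose l : ℝ) * (-1) ^ l * f (h + l)
      = ∑ j ∈ Finset.range (h + 1), (h.choose j : ℝ) * (-1) ^ j *
          ∑ l ∈ Finset.range (m + j + 1), ((m + j).choose l : ℝ) * (-1) ^ l * f l := by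
    rw [← key m h]
    have newton := shift_eq_sum_fwdDiff_iter (1 : ℕ) ((fwdDiff (1:ℕ))^[m] f) h 0
    simp only [zero_add, smul_eq_mul, mul_one] at newton
    rw [newton, Finset.mul_sum]
    refine Finset.sum_congr rfl fun j _ => ?_
    have iter : ((fwdDiff (1:ℕ))^[j] ((fwdDiff (1:ℕ))^[m] f)) 0 = ((fwdDiff (1:ℕ))^[m + j] f) 0 := by
      rw [Nat.add_comm m j, Function.iterate_add_apply]
    have kj := key (m + j) 0
    simp only [zero_add] at kj
    rw [nsmul_eq_mul, iter, ← kj, pow_add]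
    have e3 : (-1 : ℝ) ^ (j * 2) = 1 := by rw [mul_comm, pow_mul]; norm_num
    ring_nf
    rw [e3, mul_one]
  -- rewrite LHS
  have eq1 : qE q ((h : ℤ) + 1) 1 m 0
      = ((1 + q) / (1 - q) ^ m) * ∑ l ∈ Finset.range (m + 1),
          (m.choose l : ℝ) * (-1) ^ l * f (h + l) := by
    rw [qE, pow_one]
    congr 1
    refine Finset.sum_congr rfl fun l _ => ?_
    rw [Finset.prod_range_one]
    have : ((((h : ℤ) + 1 : ℤ) : ℝ) + (l : ℝ) - ((0 : ℕ) : ℝ)) = (((h + l : ℕ) : ℝ) + 1) := by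
      push_cast; ring
    rw [this, hf]
    simp only [mul_zero, Real.rpow_zero]; ring
  -- rewrite RHS
  have eq2 : ∀ j, (h.choose j : ℝ) * (q - 1) ^ j * qE q 1 1 (m + j) 0
      = ((1 + q) / (1 - q) ^ m) * ((h.choose j : ℝ) * (-1) ^ j *
          ∑ l ∈ Finset.range (m + j + 1), ((m + j).choose l : ℝ) * (-1) ^ l * f l) := by
    intro j
    rw [qE, pow_one]
    have sumeq : ∑ l ∈ Finset.range (m + j + 1),
        ((m + j).choose l : ℝ) * (-1) ^ l * q ^ ((l : ℝ) * (0 : ℝ)) /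
          ∏ i ∈ Finset.range 1, (1 + q ^ (((1 : ℤ) : ℝ) + (l : ℝ) - (i : ℝ)))
        = ∑ l ∈ Finset.range (m + j + 1), ((m + j).choose l : ℝ) * (-1) ^ l * f l := by
      refine Finset.sum_congr rfl fun l _ => ?_
      rw [Finset.prod_range_one]
      have : (((1 : ℤ) : ℝ) + (l : ℝ) - ((0 : ℕ) : ℝ)) = ((l : ℝ) + 1) := by push_cast; ring
      rw [this, hf]
      simp only [mul_zero, Real.rpow_zero]; ring
    rw [sumeq]
    have hpow : (q - 1) ^ j = (-1 : ℝ) ^ j * (1 - q) ^ j := by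
      rw [← neg_one_mul, ← mul_pow]; ring_nf
    rw [hpow, pow_add]
    have hne : (1 - q) ^ m ≠ 0 := pow_ne_zero _ h1q
    have hne2 : (1 - q) ^ j ≠ 0 := pow_ne_zero _ h1q
    field_simp
  rw [eq1, Finset.sum_congr rfl fun j _ => eq2 j, ← Finset.mul_sum, main]
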